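/- The automorphism group of the graph Γ_m is the cyclic group generated by g = (1,2,...,m)(m+1,m+2,m+3,m+4)(m+5,m+6); in particular Aut(Γ_m) ≅ ℤ/2^n ℤ. -/

import Mathlib

/-!
Write the vertices of `Γ_m` as the cycle `0, …, m-1`, the four hubs `m, …, m+3` and the two
parity vertices `m+4, m+5`. Since `4 ∣ m`, the rotation `g` preserves every edge type, so `g` is
an automorphism of order `m`. Conversely, degrees (`5`, `m/2 + 1`, `m/2 + 2`) single out the
parity vertices, and cycle vertices are the degree-5 vertices having exactly one non-parity
neighbour with which they share a parity neighbour (this separates them from the hubs when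
`m = 8`). An automorphism fixing `0` then fixes the parity vertex `m+4`, the hub `m`, the vertex
`1`, hence the whole cycle by induction, and finally every hub and parity vertex, which are
determined by their cycle neighbours. So `f ↦ f 0` embeds `Aut(Γ_m)` into the `m` cycle
vertices, and `⟨g⟩` is everything.
-/

/-- One-directional edge description of the graph `Γ_m`, on labels `1,…,m+6`. -/
def rel0 (m a b : ℕ) : Prop :=
  (1 ≤ a ∧ a ≤ m - 1 ∧ b = a + 1) ∨ (a = 1 ∧ b = m) ∨
  (a = m+1 ∧ 1 ≤ b ∧ b ≤ m ∧ (b % 4 = 1 ∨ b % 4 = 2)) ∨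
  (a = m+2 ∧ 1 ≤ b ∧ b ≤ m ∧ (b % 4 = 2 ∨ b % 4 = 3)) ∨
  (a = m+3 ∧ 1 ≤ b ∧ b ≤ m ∧ (b % 4 = 3 ∨ b % 4 = 0)) ∨
  (a = m+4 ∧ 1 ≤ b ∧ b ≤ m ∧ (b % 4 = 0 ∨ b % 4 = 1)) ∨
  (a = m+5 ∧ 1 ≤ b ∧ b ≤ m ∧ b % 2 = 1) ∨
  (a = m+6 ∧ 1 ≤ b ∧ b ≤ m ∧ b % 2 = 0) ∨
  (a = m+1 ∧ b = m+5) ∨ (a = m+3 ∧ b = m+5) ∨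
  (a = m+2 ∧ b = m+6) ∨ (a = m+4 ∧ b = m+6)

instance (m a b : ℕ) : Decidable (rel0 m a b) := by unfold rel0; infer_instance

/-- The graph `Γ_m` on vertex set `{1,…,m+6}`, encoded on `Fin (m+6)`
    where the vertex `v : Fin (m+6)` carries the label `v.val + 1`. -/
def Gamma (m : ℕ) : SimpleGraph (Fin (m+6)) where
  Adj a b := a ≠ b ∧ (rel0 m (a.val+1) (b.val+1) ∨ rel0 m (b.val+1) (a.val+1))
  symm := by constructor; intro a b h; exact ⟨fun e => h.1 e.symm, h.2.symm⟩
  loopless := by constructor; intro a h; exact h.1 rfl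

instance (m : ℕ) : DecidableRel (Gamma m).Adj := fun a b =>
  inferInstanceAs (Decidable (a ≠ b ∧ _))

/-- The permutation `g = (1,2,…,m)(m+1,m+2,m+3,m+4)(m+5,m+6)` on labels,
    written on `Fin (m+6)` (label = index + 1). -/
def gFun (m : ℕ) (v : Fin (m+6)) : Fin (m+6) :=
  if h : v.val < m then ⟨(v.val + 1) % m, lt_of_lt_of_le (Nat.mod_lt _ (by omega)) (by omega)⟩
  else if h2 : v.val < m + 3 then ⟨v.val + 1, by omega⟩
  else if h3 : v.val = m + 3 then ⟨m, by omega⟩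
  else if h4 : v.val = m + 4 then ⟨m + 5, by omega⟩
  else ⟨m + 4, by omega⟩

theorem Equiv.Perm.map_rel_iff_of_map_rel {α : Type*} [Finite α] (σ : Equiv.Perm α)
    {r : α → α → Prop} (h : ∀ a b, r a b → r (σ a) (σ b)) (a b : α) :
    r (σ a) (σ b) ↔ r a b := by
  have hpow : ∀ k : ℕ, ∀ a b, r a b → r ((σ ^ k) a) ((σ ^ k) b) := by
    intro k
    induction k with
    | zero => exact fun _ _ hab => hab
    | succ k ih =>
      intro a b hab
      rw [pow_succ', Equiv.Perm.mul_apply, Equiv.Perm.mul_apply]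
      exact h _ _ (ih a b hab)
  refine ⟨fun hab => ?_, h a b⟩
  have hσ : σ ^ (orderOf σ - 1) * σ = 1 := by
    rw [← pow_succ, Nat.sub_add_cancel (orderOf_pos σ), pow_orderOf_eq_one]
  simpa only [← Equiv.Perm.mul_apply, hσ, Equiv.Perm.one_apply]
    using hpow (orderOf σ - 1) _ _ hab

theorem Nat.count_congr_of_lt {p q : ℕ → Prop} [DecidablePred p] [DecidablePred q] {n : ℕ}
    (h : ∀ k < n, p k ↔ q k) : Nat.count p n = Nat.count q n :=
  le_antisymm (Nat.count_mono_left fun k hk => (h k hk).1)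
    (Nat.count_mono_left fun k hk => (h k hk).2)

theorem Nat.count_eq_card_of_iff {p : ℕ → Prop} [DecidablePred p] {n : ℕ} {s : Finset ℕ}
    (h : ∀ k, k < n ∧ p k ↔ k ∈ s) : Nat.count p n = s.card := by
  rw [Nat.count_eq_card_filter_range]
  congr 1
  ext k
  simp only [Finset.mem_filter, Finset.mem_range, h]

theorem Nat.count_eq_div_mul_of_periodic {p : ℕ → Prop} [DecidablePred p] {a n : ℕ}
    (hp : Function.Periodic p a) (h : a ∣ n) : Nat.count p n = n / a * Nat.count p a := by
  obtain ⟨k, rfl⟩ := h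
  rcases Nat.eq_zero_or_pos a with rfl | ha
  · simp
  rw [Nat.mul_div_cancel_left k ha, mul_comm a k]
  induction k with
  | zero => simp
  | succ k ih =>
    rw [add_mul, one_mul, Nat.count_add, ih, add_mul, one_mul,
      Nat.count_congr_of_lt (p := fun t => p (k * a + t)) (q := p)
        fun t _ => by rw [add_comm]; exact Iff.of_eq (hp.nat_mul k t)]

namespace SimpleGraph

variable {V : Type*} {G : SimpleGraph V}

instance Iso.finite {W : Type*} [Finite V] [Finite W] {G' : SimpleGraph W} : Finite (G ≃g G') :=
  Finite.of_injective _ DFunLike.coe_injective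

def HasUniqueTriangleMate (G : SimpleGraph V) (S : V → Prop) (v : V) : Prop :=
  ∃! u, ¬ S u ∧ G.Adj v u ∧ ∃ s, S s ∧ G.Adj s v ∧ G.Adj s u

theorem Iso.hasUniqueTriangleMate_apply_iff {S : V → Prop} (f : G ≃g G)
    (hS : ∀ v, S (f v) ↔ S v) (v : V) :
    G.HasUniqueTriangleMate S (f v) ↔ G.HasUniqueTriangleMate S v := by
  refine (f.toEquiv.existsUnique_congr fun u => ?_).symm
  change _ ↔ ¬S (f u) ∧ G.Adj (f v) (f u) ∧ ∃ s, S s ∧ G.Adj s (f v) ∧ G.Adj s (f u)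
  conv_rhs => rw [f.surjective.exists]
  simp only [hS, f.map_adj_iff]

end SimpleGraph

namespace Gamma

variable {m : ℕ}

/-- Each edge of `Γ_m` once, on the indices of `Fin (m + 6)` (label minus one), oriented away
from the hub or parity vertex: the hub `m + r` sees the cycle vertices `≡ r, r + 1 (mod 4)` and
the parity vertex `m + 4 + e` those `≡ e (mod 2)`. -/
def arc (m i j : ℕ) : Prop :=
  (j = i + 1 ∧ j < m) ∨ (i = 0 ∧ j + 1 = m) ∨
  (m ≤ i ∧ i < m + 4 ∧ j < m ∧ (j % 4 = i % 4 ∨ (j + 3) % 4 = i % 4)) ∨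
  (m + 4 ≤ i ∧ j < m ∧ j % 2 = i % 2) ∨
  (m ≤ i ∧ i < m + 4 ∧ j = m + 4 + i % 2)

instance (m i j : ℕ) : Decidable (arc m i j) := by unfold arc; infer_instance

theorem rel0_succ_iff_arc (h4 : 4 ∣ m) (i j : ℕ) (hi : i < m + 6) :
    rel0 m (i + 1) (j + 1) ↔ arc m i j := by
  simp only [rel0, arc]
  constructor
  · rintro (h|h|h|h|h|h|h|h|h|h|h|h) <;> omega
  · rintro (h|h|h|h|h) <;> grind

theorem adj_iff (h4 : 4 ∣ m) (u v : Fin (m + 6)) :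
    (Gamma m).Adj u v ↔ arc m u v ∨ arc m v u := by
  change u ≠ v ∧ _ ↔ _
  rw [rel0_succ_iff_arc h4 _ _ u.isLt, rel0_succ_iff_arc h4 _ _ v.isLt, and_iff_right_iff_imp]
  rintro h rfl
  simp only [arc] at h
  omega

theorem arc_succ {i : ℕ} (h : i + 1 < m) : arc m i (i + 1) := .inl ⟨rfl, h⟩

theorem arc_hub {i j : ℕ} (hi : m ≤ i) (hi' : i < m + 4) (hj : j < m)
    (h : j % 4 = i % 4 ∨ (j + 3) % 4 = i % 4) : arc m i j :=
  .inr (.inr (.inl ⟨hi, hi', hj, h⟩))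

theorem arc_parity {i j : ℕ} (hi : m + 4 ≤ i) (hj : j < m) (h : j % 2 = i % 2) : arc m i j :=
  .inr (.inr (.inr (.inl ⟨hi, hj, h⟩)))

theorem arc_hub_parity {i j : ℕ} (hi : m ≤ i) (hi' : i < m + 4) (hj : j = m + 4 + i % 2) :
    arc m i j :=
  .inr (.inr (.inr (.inr ⟨hi, hi', hj⟩)))

theorem gFun_val_cases (v : Fin (m + 6)) :
    (v.val + 1 < m ∧ (gFun m v).val = v.val + 1) ∨ (v.val + 1 = m ∧ (gFun m v).val = 0) ∨
    (m ≤ v.val ∧ v.val < m + 3 ∧ (gFun m v).val = v.val + 1) ∨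
    (v.val = m + 3 ∧ (gFun m v).val = m) ∨ (v.val = m + 4 ∧ (gFun m v).val = m + 5) ∨
    (v.val = m + 5 ∧ (gFun m v).val = m + 4) := by
  have := v.isLt
  unfold gFun
  split_ifs with h1 h2 h3 h4
  · rcases Nat.lt_or_ge (v.val + 1) m with h | h
    · exact .inl ⟨h, Nat.mod_eq_of_lt h⟩
    · exact .inr (.inl ⟨by omega, by simp [show v.val + 1 = m by omega]⟩)
  all_goals grind

theorem gFun_injective : Function.Injective (gFun m) := by
  intro u v h
  have := gFun_val_cases u
  have := gFun_val_cases v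
  have := congrArg Fin.val h
  omega

theorem arc_gFun (h4 : 4 ∣ m) {u v : Fin (m + 6)} (h : arc m u v) :
    arc m (gFun m u) (gFun m v) ∨ arc m (gFun m v) (gFun m u) := by
  have hu := gFun_val_cases u
  have hv := gFun_val_cases v
  unfold arc at h ⊢
  rcases h with h | h | h | h | h
  · by_cases hw : v.val + 1 = m
    · exact .inr (.inr (.inl (by omega)))
    · exact .inl (.inl (by omega))
  · exact .inr (.inl (by omega))
  · exact .inl (.inr (.inr (.inl (by omega))))
  · exact .inl (.inr (.inr (.inr (.inl (by omega)))))
  · exact .inl (.inr (.inr (.inr (.inr (by omega)))))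

noncomputable def gPerm (m : ℕ) : Equiv.Perm (Fin (m + 6)) :=
  Equiv.ofBijective _ (Finite.injective_iff_bijective.mp (gFun_injective (m := m)))

noncomputable def gAut (h4 : 4 ∣ m) : Gamma m ≃g Gamma m where
  toEquiv := gPerm m
  map_rel_iff' := by
    refine (gPerm m).map_rel_iff_of_map_rel (r := (Gamma m).Adj) (fun u v huv => ?_) _ _
    rw [adj_iff h4] at huv ⊢
    rcases huv with h | h
    · exact arc_gFun h4 h
    · exact (arc_gFun h4 h).symm

@[simp] theorem coe_gAut (h4 : 4 ∣ m) : ⇑(gAut h4) = gFun m := rfl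

theorem gAut_pow_apply_zero (h4 : 4 ∣ m) {k : ℕ} (hk : k < m) :
    ((gAut h4 ^ k) ⟨0, by omega⟩).val = k := by
  induction k with
  | zero => rfl
  | succ k ih =>
    rw [pow_succ', RelIso.mul_apply, coe_gAut]
    have := gFun_val_cases ((gAut h4 ^ k) ⟨0, by omega⟩)
    have := ih (by omega)
    omega

theorem degree_eq_count (h4 : 4 ∣ m) (v : Fin (m + 6)) :
    (Gamma m).degree v = Nat.count (fun j => arc m v j ∨ arc m j v) (m + 6) := by
  rw [← SimpleGraph.card_neighborFinset_eq_degree, Nat.count_eq_card_filter_range]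
  refine Finset.card_bij (fun u _ => u.val) (fun u hu => ?_) (fun _ _ _ _ => Fin.ext) ?_
  · simp only [SimpleGraph.mem_neighborFinset, adj_iff h4] at hu
    simp only [Finset.mem_filter, Finset.mem_range]
    exact ⟨u.isLt, hu⟩
  · intro j hj
    simp only [Finset.mem_filter, Finset.mem_range] at hj
    refine ⟨⟨j, hj.1⟩, ?_, rfl⟩
    simpa only [SimpleGraph.mem_neighborFinset, adj_iff h4] using hj.2

theorem degree_zero (h4 : 4 ∣ m) (hm : 0 < m) : (Gamma m).degree ⟨0, by omega⟩ = 5 := by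
  rw [degree_eq_count h4, Nat.count_eq_card_of_iff (s := {1, m - 1, m, m + 3, m + 4})]
  · simp only [Finset.card_insert_eq_ite, Finset.mem_insert, Finset.mem_singleton,
      Finset.card_singleton]
    split_ifs <;> omega
  · intro k
    simp only [arc, Finset.mem_insert, Finset.mem_singleton, true_and]
    omega

theorem degree_of_lt (h4 : 4 ∣ m) (v : Fin (m + 6)) (hv : v.val < m) :
    (Gamma m).degree v = 5 := by
  have hm : 0 < m := by omega
  have hv' : (gAut h4 ^ v.val) ⟨0, by omega⟩ = v := Fin.ext (gAut_pow_apply_zero h4 hv)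
  rw [← hv', SimpleGraph.Iso.degree_eq, degree_zero h4 hm]

theorem degree_of_hub (h4 : 4 ∣ m) (v : Fin (m + 6)) (hv : m ≤ v.val) (hv' : v.val < m + 4) :
    (Gamma m).degree v = m / 2 + 1 := by
  have hcycle : ∀ k < m, arc m v k ∨ arc m k v ↔
      k % 4 = v.val % 4 ∨ (k + 3) % 4 = v.val % 4 := by
    intro k hk
    simp only [arc]
    grind
  have hperiodic : Function.Periodic (fun k => k % 4 = v.val % 4 ∨ (k + 3) % 4 = v.val % 4) 4 :=
    fun k => propext (by omega)
  have hperiod : ∀ k, k < 4 ∧ (k % 4 = v.val % 4 ∨ (k + 3) % 4 = v.val % 4) ↔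
      k ∈ ({v.val % 4, (v.val + 1) % 4} : Finset ℕ) := by
    intro k
    simp only [Finset.mem_insert, Finset.mem_singleton]
    omega
  have htail : ∀ k, k < 6 ∧ (arc m v (m + k) ∨ arc m (m + k) v) ↔
      k ∈ ({4 + v.val % 2} : Finset ℕ) := by
    intro k
    simp only [Finset.mem_singleton, arc]
    grind
  rw [degree_eq_count h4, Nat.count_add, Nat.count_congr_of_lt hcycle,
    Nat.count_eq_div_mul_of_periodic hperiodic h4, Nat.count_eq_card_of_iff hperiod,
    Nat.count_eq_card_of_iff htail, Finset.card_pair (by omega), Finset.card_singleton]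
  omega

theorem degree_of_parity (h4 : 4 ∣ m) (v : Fin (m + 6)) (hv : m + 4 ≤ v.val) :
    (Gamma m).degree v = m / 2 + 2 := by
  have hcycle : ∀ k < m, arc m v k ∨ arc m k v ↔ k % 2 = v.val % 2 := by
    intro k hk
    simp only [arc]
    grind
  have hperiodic : Function.Periodic (fun k => k % 2 = v.val % 2) 2 :=
    fun k => propext (by omega)
  have hperiod : ∀ k, k < 2 ∧ k % 2 = v.val % 2 ↔ k ∈ ({v.val % 2} : Finset ℕ) := by
    intro k
    simp only [Finset.mem_singleton]
    omega
  have htail : ∀ k, k < 6 ∧ (arc m v (m + k) ∨ arc m (m + k) v) ↔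
      k ∈ ({v.val % 2, v.val % 2 + 2} : Finset ℕ) := by
    intro k
    simp only [Finset.mem_insert, Finset.mem_singleton, arc]
    grind
  rw [degree_eq_count h4, Nat.count_add, Nat.count_congr_of_lt hcycle,
    Nat.count_eq_div_mul_of_periodic hperiodic (dvd_trans (by norm_num) h4),
    Nat.count_eq_card_of_iff hperiod, Nat.count_eq_card_of_iff htail,
    Finset.card_pair (by omega), Finset.card_singleton]
  omega

theorem le_val_iff_degree (h4 : 4 ∣ m) (v : Fin (m + 6)) :
    m + 4 ≤ v.val ↔ (Gamma m).degree v = m / 2 + 2 := by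
  refine ⟨degree_of_parity h4 v, fun h => ?_⟩
  by_contra hv
  rcases Nat.lt_or_ge v.val m with hv' | hv'
  · rw [degree_of_lt h4 v hv'] at h
    omega
  · rw [degree_of_hub h4 v hv' (by omega)] at h
    omega

theorem le_val_apply_iff (h4 : 4 ∣ m) (f : Gamma m ≃g Gamma m) (v : Fin (m + 6)) :
    m + 4 ≤ (f v).val ↔ m + 4 ≤ v.val := by
  rw [le_val_iff_degree h4, le_val_iff_degree h4, f.degree_eq]

theorem hasUniqueTriangleMate_of_lt (h4 : 4 ∣ m) (v : Fin (m + 6)) (hv : v.val < m) :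
    (Gamma m).HasUniqueTriangleMate (fun w => m + 4 ≤ w.val) v := by
  obtain ⟨h, hh⟩ : ∃ h : Fin (m + 6), h.val = m + v.val % 4 := ⟨⟨_, by omega⟩, rfl⟩
  obtain ⟨s, hs⟩ : ∃ s : Fin (m + 6), s.val = m + 4 + v.val % 2 := ⟨⟨_, by omega⟩, rfl⟩
  refine ⟨h, ⟨by omega, (adj_iff h4 _ _).2 (.inr (arc_hub (by omega) (by omega) hv (by omega))),
    s, by omega, (adj_iff h4 _ _).2 (.inl (arc_parity (by omega) hv (by omega))),
    (adj_iff h4 _ _).2 (.inr (arc_hub_parity (by omega) (by omega) (by omega)))⟩, ?_⟩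
  rintro u ⟨hu, hvu, t, ht, htv, htu⟩
  refine Fin.ext ?_
  simp only [adj_iff h4, arc] at hvu htv htu
  omega

theorem not_hasUniqueTriangleMate_of_hub (h4 : 4 ∣ m) (hm : 8 ≤ m) (v : Fin (m + 6))
    (hv : m ≤ v.val) (hv' : v.val < m + 4) :
    ¬ (Gamma m).HasUniqueTriangleMate (fun w => m + 4 ≤ w.val) v := by
  obtain ⟨s, hs⟩ : ∃ s : Fin (m + 6), s.val = m + 4 + v.val % 2 := ⟨⟨_, by omega⟩, rfl⟩
  have hmate : ∀ j : Fin (m + 6), j.val < m → j.val % 4 = v.val % 4 →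
      ¬ m + 4 ≤ j.val ∧ (Gamma m).Adj v j ∧
        ∃ s : Fin (m + 6), m + 4 ≤ s.val ∧ (Gamma m).Adj s v ∧ (Gamma m).Adj s j :=
    fun j hj hjv => ⟨by omega, (adj_iff h4 _ _).2 (.inl (arc_hub hv hv' hj (.inl hjv))),
      s, by omega, (adj_iff h4 _ _).2 (.inr (arc_hub_parity hv hv' hs)),
      (adj_iff h4 _ _).2 (.inl (arc_parity (by omega) hj (by omega)))⟩
  rintro ⟨u, -, huniq⟩
  obtain ⟨j₁, hj₁⟩ : ∃ j : Fin (m + 6), j.val = v.val - m := ⟨⟨_, by omega⟩, rfl⟩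
  obtain ⟨j₂, hj₂⟩ : ∃ j : Fin (m + 6), j.val = v.val - m + 4 := ⟨⟨_, by omega⟩, rfl⟩
  have h₁ := huniq j₁ (hmate j₁ (by omega) (by omega))
  have h₂ := huniq j₂ (hmate j₂ (by omega) (by omega))
  have := congrArg Fin.val (h₁.trans h₂.symm)
  omega

theorem not_hasUniqueTriangleMate_of_parity (h4 : 4 ∣ m) (v : Fin (m + 6))
    (hv : m + 4 ≤ v.val) :
    ¬ (Gamma m).HasUniqueTriangleMate (fun w => m + 4 ≤ w.val) v := by
  rintro ⟨u, ⟨-, -, s, hs, hsv, -⟩, -⟩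
  rw [adj_iff h4] at hsv
  simp only [arc] at hsv
  omega

theorem val_lt_iff (h4 : 4 ∣ m) (v : Fin (m + 6)) :
    v.val < m ↔ (Gamma m).degree v = 5 ∧
      (Gamma m).HasUniqueTriangleMate (fun w => m + 4 ≤ w.val) v := by
  refine ⟨fun hv => ⟨degree_of_lt h4 v hv, hasUniqueTriangleMate_of_lt h4 v hv⟩, ?_⟩
  rintro ⟨hdeg, hmate⟩
  by_contra hv
  rcases Nat.lt_or_ge v.val (m + 4) with hv' | hv'
  · rcases Nat.lt_or_ge m 8 with hm | hm
    · rw [degree_of_hub h4 v (by omega) hv'] at hdeg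
      omega
    · exact not_hasUniqueTriangleMate_of_hub h4 hm v (by omega) hv' hmate
  · exact not_hasUniqueTriangleMate_of_parity h4 v hv' hmate

theorem val_lt_apply_iff (h4 : 4 ∣ m) (f : Gamma m ≃g Gamma m) (v : Fin (m + 6)) :
    (f v).val < m ↔ v.val < m := by
  rw [val_lt_iff h4, val_lt_iff h4, f.degree_eq,
    f.hasUniqueTriangleMate_apply_iff (le_val_apply_iff h4 f)]

theorem arc_apply (h4 : 4 ∣ m) (f : Gamma m ≃g Gamma m) {u v : Fin (m + 6)}
    (h : arc m u v) : arc m (f u) (f v) ∨ arc m (f v) (f u) :=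
  (adj_iff h4 _ _).1 (f.map_adj_iff.2 ((adj_iff h4 _ _).2 (.inl h)))

theorem val_apply_one_of_val_apply_zero (h4 : 4 ∣ m) (hm : 0 < m) (f : Gamma m ≃g Gamma m)
    (h0 : (f ⟨0, by omega⟩).val = 0) : (f ⟨1, by omega⟩).val = 1 := by
  have hs0 : (f ⟨m + 4, by omega⟩).val = m + 4 := by
    have := arc_apply h4 f (u := ⟨m + 4, by omega⟩) (v := ⟨0, by omega⟩)
      (arc_parity le_rfl hm (by dsimp only; omega))
    have hS := le_val_apply_iff h4 f ⟨m + 4, by omega⟩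
    simp only [arc] at this hS
    omega
  have hh0 : (f ⟨m, by omega⟩).val = m := by
    have := arc_apply h4 f (u := ⟨m, by omega⟩) (v := ⟨0, by omega⟩)
      (arc_hub le_rfl (by dsimp only; omega) hm (by dsimp only; omega))
    have := arc_apply h4 f (u := ⟨m, by omega⟩) (v := ⟨m + 4, by omega⟩)
      (arc_hub_parity le_rfl (by dsimp only; omega) (by dsimp only; omega))
    have hC := val_lt_apply_iff h4 f ⟨m, by omega⟩
    have hS := le_val_apply_iff h4 f ⟨m, by omega⟩
    simp only [arc] at *
    omega
  have := arc_apply h4 f (u := ⟨0, by omega⟩) (v := ⟨1, by omega⟩)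
    (arc_succ (by dsimp only; omega))
  have := arc_apply h4 f (u := ⟨m, by omega⟩) (v := ⟨1, by omega⟩)
    (arc_hub le_rfl (by dsimp only; omega) (by dsimp only; omega) (by dsimp only; omega))
  have hC := val_lt_apply_iff h4 f ⟨1, by omega⟩
  simp only [arc] at *
  omega

theorem val_apply_of_lt (h4 : 4 ∣ m) (hm : 0 < m) (f : Gamma m ≃g Gamma m)
    (h0 : (f ⟨0, by omega⟩).val = 0) (h1 : (f ⟨1, by omega⟩).val = 1) :
    ∀ i (hi : i < m), (f ⟨i, by omega⟩).val = i := by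
  have step : ∀ i (hi : i + 1 < m),
      (f ⟨i, by omega⟩).val = i ∧ (f ⟨i + 1, by omega⟩).val = i + 1 := by
    intro i
    induction i with
    | zero => exact fun _ => ⟨h0, h1⟩
    | succ i ih =>
      intro hi
      obtain ⟨hfi, hfi1⟩ := ih (by omega)
      refine ⟨hfi1, ?_⟩
      have harc := arc_apply h4 f (u := ⟨i + 1, by omega⟩) (v := ⟨i + 1 + 1, by omega⟩)
        (arc_succ hi)
      have hne : (f ⟨i + 1 + 1, by omega⟩).val ≠ (f ⟨i, by omega⟩).val :=
        Fin.val_injective.ne (f.injective.ne (Fin.ne_of_val_ne (by simp only; omega)))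
      have hC := val_lt_apply_iff h4 f ⟨i + 1 + 1, by omega⟩
      simp only [arc] at harc hC
      omega
  rintro (_ | i) hi
  · exact h0
  · exact (step i hi).2

theorem eq_one_of_val_apply_of_lt (h4 : 4 ∣ m) (hm : 0 < m) (f : Gamma m ≃g Gamma m)
    (hfix : ∀ i (hi : i < m), (f ⟨i, by omega⟩).val = i) : f = 1 := by
  refine RelIso.ext fun v => Fin.ext (show (f v).val = v.val from ?_)
  have hv := v.isLt
  rcases Nat.lt_or_ge v.val m with hvm | hvm
  · exact hfix _ hvm
  have hC := val_lt_apply_iff h4 f v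
  have hS := le_val_apply_iff h4 f v
  rcases Nat.lt_or_ge v.val (m + 4) with hvh | hvh
  · obtain ⟨r, hr⟩ : ∃ r, v.val = m + r := ⟨v.val - m, by omega⟩
    have e1 := arc_apply h4 f (u := v) (v := ⟨r, by omega⟩)
      (arc_hub hvm hvh (by dsimp only; omega) (.inl (by dsimp only; omega)))
    have e2 := arc_apply h4 f (u := v) (v := ⟨(r + 1) % 4, by omega⟩)
      (arc_hub hvm hvh (by dsimp only; omega) (.inr (by dsimp only; omega)))
    have := hfix r (by omega)
    have := hfix ((r + 1) % 4) (by omega)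
    simp only [arc] at e1 e2 hC hS
    omega
  · have e := arc_apply h4 f (u := v) (v := ⟨v.val % 2, by omega⟩)
      (arc_parity hvh (by dsimp only; omega) (by dsimp only; omega))
    have := hfix (v.val % 2) (by omega)
    simp only [arc] at e hS
    omega

theorem eq_of_apply_zero_eq (h4 : 4 ∣ m) (hm : 0 < m) {f g : Gamma m ≃g Gamma m}
    (h : f ⟨0, by omega⟩ = g ⟨0, by omega⟩) : f = g := by
  have h0 : ((g⁻¹ * f) ⟨0, by omega⟩).val = 0 := by
    rw [RelIso.mul_apply, h, RelIso.inv_apply_self]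
  exact (inv_mul_eq_one.mp (eq_one_of_val_apply_of_lt h4 hm _
    (val_apply_of_lt h4 hm _ h0 (val_apply_one_of_val_apply_zero h4 hm _ h0)))).symm

theorem natCard_aut_le (h4 : 4 ∣ m) (hm : 0 < m) : Nat.card (Gamma m ≃g Gamma m) ≤ m := by
  have hinj : Function.Injective fun f : Gamma m ≃g Gamma m =>
      (⟨(f ⟨0, by omega⟩).val, (val_lt_apply_iff h4 f _).2 hm⟩ : Fin m) :=
    fun f g h => eq_of_apply_zero_eq h4 hm (Fin.ext (Fin.mk.inj_iff.mp h))
  simpa using Nat.card_le_card_of_injective _ hinj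

theorem le_orderOf_gAut (h4 : 4 ∣ m) : m ≤ orderOf (gAut h4) := by
  by_contra! hlt
  have := gAut_pow_apply_zero h4 hlt
  rw [pow_orderOf_eq_one] at this
  exact (orderOf_pos (gAut h4)).ne' this.symm

theorem natCard_aut (h4 : 4 ∣ m) (hm : 0 < m) : Nat.card (Gamma m ≃g Gamma m) = m :=
  le_antisymm (natCard_aut_le h4 hm) ((le_orderOf_gAut h4).trans orderOf_le_card)

theorem orderOf_gAut (h4 : 4 ∣ m) (hm : 0 < m) : orderOf (gAut h4) = m :=
  le_antisymm (orderOf_le_card.trans (natCard_aut_le h4 hm)) (le_orderOf_gAut h4)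

end Gamma

/-- `Aut(Γ_m)` is the cyclic group generated by `g`;
    in particular `Aut(Γ_m) ≅ ℤ/2^n ℤ`. -/
theorem stmt7 (n m : ℕ) (hn : 2 ≤ n) (hm : m = 2 ^ n) :
    ∃ φ : Gamma m ≃g Gamma m, ⇑φ = gFun m ∧
      (∀ f : Gamma m ≃g Gamma m, f ∈ Subgroup.zpowers φ) ∧
      Nonempty ((Gamma m ≃g Gamma m) ≃* Multiplicative (ZMod (2 ^ n))) := by
  have h4 : 4 ∣ m := hm ▸ (Nat.pow_dvd_pow 2 hn : 2 ^ 2 ∣ 2 ^ n)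
  have hm0 : 0 < m := hm ▸ Nat.two_pow_pos n
  have hcard := Gamma.natCard_aut h4 hm0
  have hgen : ∀ f, f ∈ Subgroup.zpowers (Gamma.gAut h4) := by
    rw [← Subgroup.eq_top_iff', ← Subgroup.card_eq_iff_eq_top, Nat.card_zpowers,
      Gamma.orderOf_gAut h4 hm0, hcard]
  exact ⟨Gamma.gAut h4, rfl, hgen, ⟨(zmodMulEquivOfGenerator hgen (hcard.trans hm)).symm⟩⟩
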